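/- Let n ≥ 1 and a = (1/2)[[0, −I_n],[I_n, 0]] ∈ so(2n). For smooth maps X, Y : ℝ² → so(n) (real skew-symmetric n×n matrices), let u = [[X, Y],[Y, −X]] ∈ so(2n) in block form. Then u satisfies u_t = [a, u_xx] − (1/2)[u, [u, [a, u]]] if and only if X_t = −Y_xx + [X,[X,Y]] + 2Y³ + Y X² + X² Y and Y_t = X_xx + [Y,[X,Y]] − 2X³ − X Y² − Y² X. -/

import Mathlib

open Matrix
open scoped ContDiff

attribute [local instance] Matrix.frobeniusNormedAddCommGroup Matrix.frobeniusNormedSpace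

section Aux

variable {n : ℕ}

private lemma aux_half2 (m : Matrix (Fin n) (Fin n) ℝ) : (1/2 : ℝ) • (2 • m) = m := by
  rw [two_smul]; module

private lemma aux_hW (A B : Matrix (Fin n) (Fin n) ℝ) :
    ((1/2 : ℝ) • Matrix.fromBlocks 0 (-1) 1 0) * Matrix.fromBlocks A B B (-A)
      - Matrix.fromBlocks A B B (-A) * ((1/2 : ℝ) • Matrix.fromBlocks 0 (-1) 1 0)
      = Matrix.fromBlocks (-B) A A B := by
  simp only [Matrix.smul_mul, Matrix.mul_smul, Matrix.fromBlocks_multiply,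
    Matrix.zero_mul, Matrix.mul_zero, Matrix.neg_mul, Matrix.mul_neg,
    Matrix.one_mul, Matrix.mul_one, zero_add, add_zero, neg_neg,
    Matrix.fromBlocks_smul, sub_eq_add_neg, Matrix.fromBlocks_neg,
    Matrix.fromBlocks_add, Matrix.fromBlocks_inj]
  refine ⟨by module, by module, by module, by module⟩

private lemma aux_hV (A B : Matrix (Fin n) (Fin n) ℝ) :
    Matrix.fromBlocks A B B (-A) * Matrix.fromBlocks (-B) A A B
      - Matrix.fromBlocks (-B) A A B * Matrix.fromBlocks A B B (-A)
      = Matrix.fromBlocks (-(2 • (A*B - B*A))) (2 • (A*A + B*B))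
          (-(2 • (A*A + B*B))) (-(2 • (A*B - B*A))) := by
  simp only [Matrix.fromBlocks_multiply, sub_eq_add_neg, Matrix.fromBlocks_neg,
    Matrix.fromBlocks_add, Matrix.fromBlocks_inj]
  refine ⟨by noncomm_ring, by noncomm_ring, by noncomm_ring, by noncomm_ring⟩

private lemma aux_hU (A B : Matrix (Fin n) (Fin n) ℝ) :
    Matrix.fromBlocks A B B (-A) *
        Matrix.fromBlocks (-(2 • (A*B - B*A))) (2 • (A*A + B*B))
          (-(2 • (A*A + B*B))) (-(2 • (A*B - B*A)))
      - Matrix.fromBlocks (-(2 • (A*B - B*A))) (2 • (A*A + B*B))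
          (-(2 • (A*A + B*B))) (-(2 • (A*B - B*A))) * Matrix.fromBlocks A B B (-A)
      = Matrix.fromBlocks
          (2 • (-(A*(A*B-B*A) - (A*B-B*A)*A) - (B*(A*A+B*B) + (A*A+B*B)*B)))
          (2 • ((A*(A*A+B*B) + (A*A+B*B)*A) + ((A*B-B*A)*B - B*(A*B-B*A))))
          (2 • ((A*(A*A+B*B) + (A*A+B*B)*A) + ((A*B-B*A)*B - B*(A*B-B*A))))
          (2 • ((A*(A*B-B*A) - (A*B-B*A)*A) + (B*(A*A+B*B) + (A*A+B*B)*B))) := by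
  simp only [Matrix.fromBlocks_multiply, sub_eq_add_neg, Matrix.fromBlocks_neg,
    Matrix.fromBlocks_add, Matrix.fromBlocks_inj]
  refine ⟨by noncomm_ring, by noncomm_ring, by noncomm_ring, by noncomm_ring⟩

private lemma aux_alg (A B R S : Matrix (Fin n) (Fin n) ℝ)
    (a : Matrix (Fin n ⊕ Fin n) (Fin n ⊕ Fin n) ℝ)
    (ha : a = (1/2 : ℝ) • Matrix.fromBlocks 0 (-1) 1 0)
    (u v : Matrix (Fin n ⊕ Fin n) (Fin n ⊕ Fin n) ℝ)
    (hu : u = Matrix.fromBlocks A B B (-A)) (hv : v = Matrix.fromBlocks R S S (-R)) :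
    (a * v - v * a)
      - (1/2 : ℝ) • (u * (u * (a * u - u * a) - (a * u - u * a) * u)
          - (u * (a * u - u * a) - (a * u - u * a) * u) * u)
    = Matrix.fromBlocks
        (-S + (A * (A * B - B * A) - (A * B - B * A) * A)
            + 2 • (B * B * B) + B * (A * A) + (A * A) * B)
        (R + (B * (A * B - B * A) - (A * B - B * A) * B)
            - 2 • (A * A * A) - A * (B * B) - (B * B) * A)
        (R + (B * (A * B - B * A) - (A * B - B * A) * B)
            - 2 • (A * A * A) - A * (B * B) - (B * B) * A)
        (-(-S + (A * (A * B - B * A) - (A * B - B * A) * A)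
            + 2 • (B * B * B) + B * (A * A) + (A * A) * B)) := by
  subst ha hu hv
  rw [aux_hW A B, aux_hV A B, aux_hU A B, aux_hW R S]
  simp only [Matrix.fromBlocks_smul, aux_half2, sub_eq_add_neg, Matrix.fromBlocks_neg,
    Matrix.fromBlocks_add, Matrix.fromBlocks_inj]
  refine ⟨by noncomm_ring, by noncomm_ring, by noncomm_ring, by noncomm_ring⟩

private noncomputable def auxLB (n : ℕ) :
    Matrix (Fin n) (Fin n) ℝ × Matrix (Fin n) (Fin n) ℝ →ₗ[ℝ]
      Matrix (Fin n ⊕ Fin n) (Fin n ⊕ Fin n) ℝ where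
  toFun P := Matrix.fromBlocks P.1 P.2 P.2 (-P.1)
  map_add' P Q := by
    simp [Matrix.fromBlocks_add, neg_add, add_comm]
  map_smul' c P := by
    rw [Matrix.fromBlocks_smul]
    simp [smul_neg]

private lemma aux_deriv_LB (f g : ℝ → Matrix (Fin n) (Fin n) ℝ) (x : ℝ)
    (hf : DifferentiableAt ℝ f x) (hg : DifferentiableAt ℝ g x) :
    deriv (fun s => Matrix.fromBlocks (f s) (g s) (g s) (-(f s))) x
      = Matrix.fromBlocks (deriv f x) (deriv g x) (deriv g x) (-(deriv f x)) := by
  have h := ((auxLB n).toContinuousLinearMap.hasFDerivAt.comp_hasDerivAt x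
    ((hf.hasDerivAt).prodMk (hg.hasDerivAt))).deriv
  simp only [Function.comp_def] at h
  exact h

private lemma aux_diff_right (f : ℝ → ℝ → Matrix (Fin n) (Fin n) ℝ)
    (hf : ContDiff ℝ ∞ (Function.uncurry f)) (x t : ℝ) :
    DifferentiableAt ℝ (fun s => f x s) t := by
  have : Differentiable ℝ (fun s : ℝ => Function.uncurry f (x, s)) :=
    (hf.differentiable (by norm_num)).comp ((differentiable_const x).prodMk differentiable_id)
  exact this.differentiableAt

private lemma aux_diff_left (f : ℝ → ℝ → Matrix (Fin n) (Fin n) ℝ)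
    (hf : ContDiff ℝ ∞ (Function.uncurry f)) (x t : ℝ) :
    DifferentiableAt ℝ (fun s => f s t) x := by
  have : Differentiable ℝ (fun s : ℝ => Function.uncurry f (s, t)) :=
    (hf.differentiable (by norm_num)).comp (differentiable_id.prodMk (differentiable_const t))
  exact this.differentiableAt

private lemma aux_pd_hasDeriv (f : ℝ → ℝ → Matrix (Fin n) (Fin n) ℝ)
    (hf : ContDiff ℝ ∞ (Function.uncurry f)) (t x : ℝ) :
    HasDerivAt (fun s => f s t) (fderiv ℝ (Function.uncurry f) (x, t) (1, 0)) x := by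
  have h1 : HasDerivAt (fun s : ℝ => (s, t)) ((1:ℝ), (0:ℝ)) x :=
    (hasDerivAt_id x).prodMk (hasDerivAt_const x t)
  exact ((hf.differentiable (by norm_num) (x, t)).hasFDerivAt.comp_hasDerivAt x h1)

private lemma aux_pd_diff (f : ℝ → ℝ → Matrix (Fin n) (Fin n) ℝ)
    (hf : ContDiff ℝ ∞ (Function.uncurry f)) (t x : ℝ) :
    DifferentiableAt ℝ (fun s => deriv (fun s' => f s' t) s) x := by
  have heq : (fun s => deriv (fun s' => f s' t) s)
      = fun s => fderiv ℝ (Function.uncurry f) (s, t) (1, 0) :=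
    funext fun s => (aux_pd_hasDeriv f hf t s).deriv
  rw [heq]
  have h2 : ContDiff ℝ ∞ (fun s : ℝ => fderiv ℝ (Function.uncurry f) (s, t) (1, 0)) :=
    (hf.contDiff_fderiv_apply (m := ∞) (by simp)).comp
      ((contDiff_id.prodMk contDiff_const).prodMk contDiff_const)
  exact (h2.differentiable (by norm_num)).differentiableAt

end Aux

/-- Let `n ≥ 1` and `a = (1/2)[[0, −I],[I, 0]] ∈ so(2n)`.  For smooth maps
`X, Y : ℝ² → so(n)` let `u = [[X, Y],[Y, −X]] ∈ so(2n)`.  Then `u` satisfies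
`u_t = [a, u_xx] − (1/2)[u,[u,[a,u]]]` iff
`X_t = −Y_xx + [X,[X,Y]] + 2Y³ + YX² + X²Y` and
`Y_t = X_xx + [Y,[X,Y]] − 2X³ − XY² − Y²X`. -/
theorem stmt_6 (n : ℕ) (hn : 1 ≤ n)
    (a : Matrix (Fin n ⊕ Fin n) (Fin n ⊕ Fin n) ℝ)
    (ha : a = (1 / 2 : ℝ) • Matrix.fromBlocks 0 (-1) 1 0)
    (X Y : ℝ → ℝ → Matrix (Fin n) (Fin n) ℝ)
    (hX : ContDiff ℝ ∞ (Function.uncurry X))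
    (hY : ContDiff ℝ ∞ (Function.uncurry Y))
    (hXskew : ∀ x t : ℝ, (X x t)ᵀ = -(X x t))
    (hYskew : ∀ x t : ℝ, (Y x t)ᵀ = -(Y x t))
    (u : ℝ → ℝ → Matrix (Fin n ⊕ Fin n) (Fin n ⊕ Fin n) ℝ)
    (hu : ∀ x t : ℝ, u x t = Matrix.fromBlocks (X x t) (Y x t) (Y x t) (-(X x t))) :
    (∀ x t : ℝ,
        deriv (fun s => u x s) t
          = (a * deriv (fun s => deriv (fun s' => u s' t) s) x
              - deriv (fun s => deriv (fun s' => u s' t) s) x * a)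
            - (1 / 2 : ℝ) • (u x t * (u x t * (a * u x t - u x t * a)
                  - (a * u x t - u x t * a) * u x t)
                - (u x t * (a * u x t - u x t * a)
                  - (a * u x t - u x t * a) * u x t) * u x t))
      ↔ (∀ x t : ℝ,
          deriv (fun s => X x s) t
            = -(deriv (fun s => deriv (fun s' => Y s' t) s) x)
              + (X x t * (X x t * Y x t - Y x t * X x t)
                  - (X x t * Y x t - Y x t * X x t) * X x t)
              + 2 • (Y x t * Y x t * Y x t)
              + Y x t * (X x t * X x t) + (X x t * X x t) * Y x t ∧
          deriv (fun s => Y x s) t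
            = deriv (fun s => deriv (fun s' => X s' t) s) x
              + (Y x t * (X x t * Y x t - Y x t * X x t)
                  - (X x t * Y x t - Y x t * X x t) * Y x t)
              - 2 • (X x t * X x t * X x t)
              - X x t * (Y x t * Y x t) - (Y x t * Y x t) * X x t) := by
  have e1 : ∀ x t : ℝ, deriv (fun s => u x s) t
      = Matrix.fromBlocks (deriv (fun s => X x s) t) (deriv (fun s => Y x s) t)
          (deriv (fun s => Y x s) t) (-(deriv (fun s => X x s) t)) := by
    intro x t
    have h : (fun s => u x s)
        = fun s => Matrix.fromBlocks (X x s) (Y x s) (Y x s) (-(X x s)) :=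
      funext fun s => hu x s
    rw [h, aux_deriv_LB _ _ t (aux_diff_right X hX x t) (aux_diff_right Y hY x t)]
  have e2 : ∀ x t : ℝ, deriv (fun s => deriv (fun s' => u s' t) s) x
      = Matrix.fromBlocks (deriv (fun s => deriv (fun s' => X s' t) s) x)
          (deriv (fun s => deriv (fun s' => Y s' t) s) x)
          (deriv (fun s => deriv (fun s' => Y s' t) s) x)
          (-(deriv (fun s => deriv (fun s' => X s' t) s) x)) := by
    intro x t
    have h1 : (fun s => deriv (fun s' => u s' t) s)
        = fun s => Matrix.fromBlocks (deriv (fun s' => X s' t) s)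
            (deriv (fun s' => Y s' t) s) (deriv (fun s' => Y s' t) s)
            (-(deriv (fun s' => X s' t) s)) := by
      funext s
      have h : (fun s' => u s' t)
          = fun s' => Matrix.fromBlocks (X s' t) (Y s' t) (Y s' t) (-(X s' t)) :=
        funext fun s' => hu s' t
      rw [h, aux_deriv_LB _ _ s (aux_diff_left X hX s t) (aux_diff_left Y hY s t)]
    rw [h1, aux_deriv_LB _ _ x (aux_pd_diff X hX t x) (aux_pd_diff Y hY t x)]
  refine forall_congr' fun x => forall_congr' fun t => ?_
  rw [e1 x t, aux_alg (X x t) (Y x t)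
      (deriv (fun s => deriv (fun s' => X s' t) s) x)
      (deriv (fun s => deriv (fun s' => Y s' t) s) x)
      a ha (u x t) _ (hu x t) (e2 x t), Matrix.fromBlocks_inj]
  exact ⟨fun h => ⟨h.1, h.2.1⟩, fun h => ⟨h.1, h.2, h.2, by rw [h.1]⟩⟩
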